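/- In the setting of the extension theorem on Skorokhod space: for ω ∈ 𝔻 and n ∈ ℕ, the atom of the σ-field D_n = σ(X_s, s ∈ [0,n]) containing ω equals the set of all paths agreeing with ω on [0,n], i.e. ⋂{B ∈ D_n : ω ∈ B} = {ω' ∈ 𝔻 : ω'(s) = ω(s) for all s ∈ [0,n]}. -/

import Mathlib

open MeasureTheory Set Filter

/-- A function `f : [0,∞) → β` is càdlàg: right-continuous with left limits. -/
def IsCadlag {β : Type*} [TopologicalSpace β] (f : NNReal → β) : Prop :=
  (∀ t, ContinuousWithinAt f (Ici t) t) ∧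
    ∀ t, 0 < t → ∃ L, Tendsto f (nhdsWithin t (Iio t)) (nhds L)

/-- The Skorokhod path space `𝔻 = D([0,∞), B)` of càdlàg paths into `B`. -/
def Skor (B : Type*) [NormedAddCommGroup B] : Type _ :=
  {f : NNReal → B // IsCadlag f}

/-!
Each level set `{ω' | f i ω' = f i ω}` with `i ∈ S` lies in `σ(f i, i ∈ S)`, since singletons are
measurable. Conversely every set of `σ(f i, i ∈ S)` is a preimage under the restriction
`ω ↦ (f i ω)_{i ∈ S}`, so it cannot separate two points with the same restriction.
-/

namespace MeasurableSpace

variable {Ω ι : Type*} {β : ι → Type*} [∀ i, MeasurableSpace (β i)]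

theorem mem_of_measurableSet_comap {γ : Type*} {m : MeasurableSpace γ} {g : Ω → γ}
    {A : Set Ω} {ω ω' : Ω} (hA : MeasurableSet[m.comap g] A) (hg : g ω' = g ω) (hω : ω ∈ A) :
    ω' ∈ A := by
  obtain ⟨T, -, rfl⟩ := hA
  exact (hg ▸ hω : g ω' ∈ T)

theorem biSup_comap_le_comap_restrict (f : ∀ i, Ω → β i) (S : Set ι) :
    ⨆ i ∈ S, MeasurableSpace.comap (f i) inferInstance ≤
      MeasurableSpace.comap (fun ω (i : S) => f i ω) pi :=
  iSup₂_le fun i hi => by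
    rw [show f i = (fun g : ∀ j : S, β j => g ⟨i, hi⟩) ∘ fun ω (j : S) => f j ω from rfl,
      ← MeasurableSpace.comap_comp]
    exact MeasurableSpace.comap_mono (measurable_pi_apply (⟨i, hi⟩ : S)).comap_le

theorem sInter_measurableSet_biSup_comap [∀ i, MeasurableSingletonClass (β i)]
    (f : ∀ i, Ω → β i) (S : Set ι) (ω : Ω) :
    ⋂₀ {A | MeasurableSet[⨆ i ∈ S, MeasurableSpace.comap (f i) inferInstance] A ∧ ω ∈ A} =
      {ω' | ∀ i ∈ S, f i ω' = f i ω} := by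
  ext ω'
  simp only [mem_sInter]
  refine ⟨fun h i hi => h {ω'' | f i ω'' = f i ω} ⟨?_, rfl⟩, fun h A ⟨hA, hω⟩ => ?_⟩
  · exact le_biSup (fun i => MeasurableSpace.comap (f i) inferInstance) hi _
      ⟨{f i ω}, measurableSet_singleton _, rfl⟩
  · exact mem_of_measurableSet_comap (biSup_comap_le_comap_restrict f S A hA)
      (funext fun i => h i i.2) hω

end MeasurableSpace

theorem atom_of_canonical_sigma_field_general
    {B : Type*} [NormedAddCommGroup B]
    [MeasurableSpace B] [BorelSpace B]
    (n : ℕ) (ω : Skor B) :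
    ⋂₀ {A : Set (Skor B) |
        MeasurableSet[⨆ s ∈ {s : NNReal | s ≤ (n : NNReal)},
          MeasurableSpace.comap (fun ω' : Skor B => ω'.1 s) inferInstance] A ∧ ω ∈ A} =
      {ω' : Skor B | ∀ s : NNReal, s ≤ (n : NNReal) → ω'.1 s = ω.1 s} :=
  MeasurableSpace.sInter_measurableSet_biSup_comap (β := fun _ => B)
    (fun s (ω' : Skor B) => ω'.1 s) {s | s ≤ (n : NNReal)} ω

/-- for `ω ∈ 𝔻` and `n ∈ ℕ`, the atom of `D_n = σ(X_s, s ∈ [0,n])`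
containing `ω` is exactly the set of paths agreeing with `ω` on `[0,n]`:
`⋂ {A ∈ D_n : ω ∈ A} = {ω' : ω'(s) = ω(s) for all s ∈ [0,n]}`. -/
theorem atom_of_canonical_sigma_field
    {B : Type*} [NormedAddCommGroup B] [NormedSpace ℝ B]
    [MeasurableSpace B] [BorelSpace B]
    (n : ℕ) (ω : Skor B) :
    ⋂₀ {A : Set (Skor B) |
        MeasurableSet[⨆ s ∈ {s : NNReal | s ≤ (n : NNReal)},
          MeasurableSpace.comap (fun ω' : Skor B => ω'.1 s) inferInstance] A ∧ ω ∈ A} =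
      {ω' : Skor B | ∀ s : NNReal, s ≤ (n : NNReal) → ω'.1 s = ω.1 s} :=
  atom_of_canonical_sigma_field_general n ω
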